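/- arXiv:1203.4448 — 10 statements merged into one kernel-verified Lean document; each statement's English description precedes it below -/
import Mathlib

section
/- Let R be a commutative Noetherian local ring, let a1, a2 be a regular sequence in R, and let p ≥ 2. Set x1 = a1^p, x2 = a2^p, y = a1*a2^(p-1), and I = (x1, x2, y), J = (x1, x2). Then I^p = J * I^(p-1), i.e., J is a reduction of I with reduction number at most p-1. -/
/-! Write `I = J + (y)`. Expanding `(J + (y))^p`, every term other than `(y^p)` lies in
`J * I^(p-1)`, and `y^p = x1 * x2^(p-1)` lies there too. -/

namespace Ideal

variable {R : Type*} [CommRing R]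

theorem sup_pow_succ_le (J K : Ideal R) (n : ℕ) :
    (J ⊔ K) ^ (n + 1) ≤ J * (J ⊔ K) ^ n ⊔ K ^ (n + 1) := by
  induction n with
  | zero => simp
  | succ n ih =>
    have hK : K * (J ⊔ K) ^ (n + 1) ≤ J * (J ⊔ K) ^ (n + 1) ⊔ K ^ (n + 2) :=
      calc K * (J ⊔ K) ^ (n + 1) ≤ K * (J * (J ⊔ K) ^ n ⊔ K ^ (n + 1)) := mul_mono_right ih
        _ = J * (K * (J ⊔ K) ^ n) ⊔ K ^ (n + 2) := by rw [mul_sup, mul_left_comm, ← pow_succ']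
        _ ≤ J * (J ⊔ K) ^ (n + 1) ⊔ K ^ (n + 2) := by
          gcongr
          rw [pow_succ']
          exact mul_mono_left le_sup_right
    calc (J ⊔ K) ^ (n + 2) = J * (J ⊔ K) ^ (n + 1) ⊔ K * (J ⊔ K) ^ (n + 1) := by
          rw [pow_succ' _ (n + 1), sup_mul]
      _ ≤ J * (J ⊔ K) ^ (n + 1) ⊔ K ^ (n + 2) := sup_le le_sup_left hK

theorem sup_pow_succ_eq_mul_pow_of_le {J K : Ideal R} {n : ℕ}
    (h : K ^ (n + 1) ≤ J * (J ⊔ K) ^ n) : (J ⊔ K) ^ (n + 1) = J * (J ⊔ K) ^ n := by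
  refine le_antisymm ((sup_pow_succ_le J K n).trans (sup_le le_rfl h)) ?_
  rw [pow_succ']
  exact mul_mono_left le_sup_left

end Ideal

theorem stmt_0_general {R : Type*} [CommRing R]
    (a1 a2 : R)
    (p : ℕ) (hp : 2 ≤ p)
    (I J : Ideal R)
    (hI : I = Ideal.span {a1 ^ p, a2 ^ p, a1 * a2 ^ (p - 1)})
    (hJ : J = Ideal.span {a1 ^ p, a2 ^ p}) :
    I ^ p = J * I ^ (p - 1) := by
  obtain ⟨n, rfl⟩ : ∃ n, p = n + 1 := ⟨p - 1, by omega⟩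
  simp only [Nat.add_sub_cancel] at hI ⊢
  have hIJ : I = J ⊔ Ideal.span {a1 * a2 ^ n} := by
    rw [hI, hJ, ← Ideal.span_union, Set.insert_union, Set.singleton_union]
  have hy : (a1 * a2 ^ n) ^ (n + 1) = a1 ^ (n + 1) * (a2 ^ (n + 1)) ^ n := by ring
  rw [hIJ]
  refine Ideal.sup_pow_succ_eq_mul_pow_of_le ?_
  rw [Ideal.span_singleton_pow, Ideal.span_singleton_le_iff_mem, hy, ← hIJ]
  refine Ideal.mul_mem_mul (hJ ▸ Ideal.subset_span (by simp)) (Ideal.pow_mem_pow ?_ n)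
  exact hI ▸ Ideal.subset_span (by simp)

/-- For a Noetherian local ring `R` and a regular sequence `a1, a2`,
with `x1 = a1^p`, `x2 = a2^p`, `y = a1*a2^(p-1)`, `I = (x1,x2,y)`, `J = (x1,x2)`,
one has `I^p = J * I^(p-1)`. -/
theorem stmt_0 {R : Type*} [CommRing R] [IsNoetherianRing R] [IsLocalRing R]
    (a1 a2 : R) (hreg1 : a1 ∈ nonZeroDivisors R)
    (hreg2 : ∀ r : R, a2 * r ∈ Ideal.span {a1} → r ∈ Ideal.span {a1})
    (p : ℕ) (hp : 2 ≤ p)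
    (I J : Ideal R)
    (hI : I = Ideal.span {a1 ^ p, a2 ^ p, a1 * a2 ^ (p - 1)})
    (hJ : J = Ideal.span {a1 ^ p, a2 ^ p}) :
    I ^ p = J * I ^ (p - 1) :=
  stmt_0_general a1 a2 p hp I J hI hJ
end

section
/- Let R = k[a1, a2] be a polynomial ring in two variables over a field k, p ≥ 2, x1 = a1^p, x2 = a2^p, y = a1*a2^(p-1), I = (x1, x2, y), J = (x1, x2). Then y^(p-1) ∉ J * I^(p-2), so the reduction number of I with respect to J equals p-1. -/
open MvPolynomial Pointwise

namespace Stmt1Aux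

/-- exponent finsupp with `a1 ↦ α`, `a2 ↦ β` -/
noncomputable def dd (α β : ℕ) : Fin 2 →₀ ℕ :=
  Finsupp.single 0 α + Finsupp.single 1 β

@[simp] lemma dd_apply0 (α β : ℕ) : dd α β 0 = α := by simp [dd]
@[simp] lemma dd_apply1 (α β : ℕ) : dd α β 1 = β := by
  simp [dd, Finsupp.single_apply]

lemma dd_add (α β α' β' : ℕ) : dd α β + dd α' β' = dd (α + α') (β + β') := by
  simp only [dd, Finsupp.single_add]; abel

lemma dd_le_iff {α β α' β' : ℕ} : dd α β ≤ dd α' β' ↔ α ≤ α' ∧ β ≤ β' := by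
  constructor
  · intro h; exact ⟨by simpa using h 0, by simpa using h 1⟩
  · intro ⟨h1, h2⟩ i
    refine Fin.cases ?_ ?_ i
    · simpa using h1
    · intro j
      have : j = 0 := Subsingleton.elim _ _
      subst this; simpa using h2

variable {k : Type*} [Field k]

/-- the monomial `a1^α * a2^β` -/
noncomputable def mn (α β : ℕ) : MvPolynomial (Fin 2) k := monomial (dd α β) 1

lemma mn_mul (α β α' β' : ℕ) :
    (mn α β : MvPolynomial (Fin 2) k) * mn α' β' = mn (α + α') (β + β') := by
  simp [mn, monomial_mul, dd_add]

lemma mn_pow (α β n : ℕ) :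
    (mn α β : MvPolynomial (Fin 2) k) ^ n = mn (n * α) (n * β) := by
  induction n with
  | zero => simp [mn, dd]
  | succ n ih => rw [pow_succ, ih, mn_mul]; ring_nf

lemma X0_pow (n : ℕ) : (X 0 : MvPolynomial (Fin 2) k) ^ n = mn n 0 := by
  rw [X_pow_eq_monomial]; simp [mn, dd]

lemma X1_pow (n : ℕ) : (X 1 : MvPolynomial (Fin 2) k) ^ n = mn 0 n := by
  rw [X_pow_eq_monomial]; simp [mn, dd]

lemma y_eq (n : ℕ) : (X 0 * X 1 ^ n : MvPolynomial (Fin 2) k) = mn 1 n := by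
  rw [X1_pow]
  have : (X 0 : MvPolynomial (Fin 2) k) = mn 1 0 := by
    simpa using X0_pow (k := k) 1
  rw [this, mn_mul]; norm_num

/-- coefficients below `e0` vanish on the span of monomials whose exponent is not `≤ e0` -/
lemma coeff_zero_of_mem_span {G : Set (MvPolynomial (Fin 2) k)} {e0 : Fin 2 →₀ ℕ}
    (hG : ∀ g ∈ G, ∃ dg : Fin 2 →₀ ℕ, ¬ dg ≤ e0 ∧ g = monomial dg 1)
    {f : MvPolynomial (Fin 2) k} (hf : f ∈ Ideal.span G) :
    ∀ e ≤ e0, coeff e f = 0 := by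
  refine Submodule.span_induction ?_ ?_ ?_ ?_ hf
  · rintro g hg e he
    obtain ⟨dg, hdg, rfl⟩ := hG g hg
    rw [coeff_monomial]
    split_ifs with h
    · exact absurd (h ▸ he) hdg
    · rfl
  · intro e _; simp
  · intro f g _ _ hf hg e he
    simp [coeff_add, hf e he, hg e he]
  · intro r f _ hf e he
    rw [smul_eq_mul, coeff_mul]
    refine Finset.sum_eq_zero fun x hx => ?_
    have hx2 : x.2 ≤ e0 := by
      refine le_trans ?_ he
      have := Finset.HasAntidiagonal.mem_antidiagonal.1 hx
      exact this ▸ le_add_self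
    rw [hf x.2 hx2, mul_zero]

end Stmt1Aux

open Stmt1Aux

/-- In `R = k[a1,a2]`, with `x1 = a1^p`, `x2 = a2^p`, `y = a1*a2^(p-1)`,
`I = (x1,x2,y)`, `J = (x1,x2)`, one has `y^(p-1) ∉ J*I^(p-2)`, so the reduction
number of `I` with respect to `J` equals `p-1`. -/
theorem stmt_1 {k : Type*} [Field k] (p : ℕ) (hp : 2 ≤ p)
    (a1 a2 : MvPolynomial (Fin 2) k) (ha1 : a1 = X 0) (ha2 : a2 = X 1)
    (I J : Ideal (MvPolynomial (Fin 2) k))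
    (hI : I = Ideal.span {a1 ^ p, a2 ^ p, a1 * a2 ^ (p - 1)})
    (hJ : J = Ideal.span {a1 ^ p, a2 ^ p}) :
    (a1 * a2 ^ (p - 1)) ^ (p - 1) ∉ J * I ^ (p - 2) ∧
      IsLeast {r : ℕ | I ^ (r + 1) = J * I ^ r} (p - 1) := by
  obtain ⟨q, rfl⟩ : ∃ q, p = q + 2 := ⟨p - 2, by omega⟩
  subst ha1 ha2
  simp only [show q + 2 - 1 = q + 1 by omega, show q + 2 - 2 = q by omega] at hI hJ ⊢
  -- rewrite generators as mn monomials
  have hx1 : (X 0 : MvPolynomial (Fin 2) k) ^ (q+2) = mn (q+2) 0 := X0_pow (q+2)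
  have hx2 : (X 1 : MvPolynomial (Fin 2) k) ^ (q+2) = mn 0 (q+2) := X1_pow (q+2)
  have hy : (X 0 * X 1 ^ (q + 1) : MvPolynomial (Fin 2) k) = mn 1 (q + 1) := y_eq (q + 1)
  rw [hx1, hx2] at hI hJ; rw [hy] at hI
  -- the generating sets for powers of I
  set Sg : ℕ → Set (MvPolynomial (Fin 2) k) := fun n =>
    {g | ∃ i j l : ℕ, i + j + l = n ∧ g = mn ((q+2) * i + l) ((q+2) * j + l * (q+1))} with hSg
  have hIpow : ∀ n : ℕ, I ^ n ≤ Ideal.span (Sg n) := by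
    intro n
    induction n with
    | zero =>
        rw [pow_zero]
        have h1 : (1 : MvPolynomial (Fin 2) k) ∈ Sg 0 := by
          refine ⟨0, 0, 0, by omega, ?_⟩
          simp [mn, dd]
        rw [Ideal.one_eq_top, top_le_iff, Ideal.eq_top_iff_one]
        exact Ideal.subset_span h1
    | succ n ih =>
        rw [pow_succ]
        calc I ^ n * I ≤ Ideal.span (Sg n) * Ideal.span {mn (q+2) 0, mn 0 (q+2), mn 1 (q+1)} :=
              Ideal.mul_mono ih (le_of_eq hI)
          _ = Ideal.span (Sg n * {mn (q+2) 0, mn 0 (q+2), mn 1 (q+1)}) := Ideal.span_mul_span' _ _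
          _ ≤ Ideal.span (Sg (n+1)) := by
              apply Ideal.span_mono
              rintro g hg
              obtain ⟨s, hs, t, ht, rfl⟩ := Set.mem_mul.1 hg
              obtain ⟨i, j, l, hijl, rfl⟩ := hs
              rcases ht with h | h | h <;> subst h
              · exact ⟨i + 1, j, l, by omega, by rw [mn_mul]; congr 1 <;> ring⟩
              · exact ⟨i, j + 1, l, by omega, by rw [mn_mul]; congr 1 <;> ring⟩
              · exact ⟨i, j, l + 1, by omega, by rw [mn_mul]; congr 1 <;> ring⟩
  -- the key non-membership
  have hx1I : (mn (q+2) 0 : MvPolynomial (Fin 2) k) ∈ I := hI ▸ Ideal.subset_span (by simp)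
  have hx2I : (mn 0 (q+2) : MvPolynomial (Fin 2) k) ∈ I := hI ▸ Ideal.subset_span (by simp)
  have hyI : (mn 1 (q+1) : MvPolynomial (Fin 2) k) ∈ I := hI ▸ Ideal.subset_span (by simp)
  have hx1J : (mn (q+2) 0 : MvPolynomial (Fin 2) k) ∈ J := hJ ▸ Ideal.subset_span (by simp)
  have hx2J : (mn 0 (q+2) : MvPolynomial (Fin 2) k) ∈ J := hJ ▸ Ideal.subset_span (by simp)
  have hkey : (mn 1 (q+1) : MvPolynomial (Fin 2) k) ^ (q+1) ∉ J * I ^ q := by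
    intro hmem
    have hle : J * I ^ q ≤ Ideal.span (({mn (q+2) 0, mn 0 (q+2)} : Set (MvPolynomial (Fin 2) k)) * Sg q) := by
      calc J * I ^ q ≤ Ideal.span {mn (q+2) 0, mn 0 (q+2)} * Ideal.span (Sg q) :=
            Ideal.mul_mono (le_of_eq hJ) (hIpow q)
        _ = _ := Ideal.span_mul_span' _ _
    have hG : ∀ g ∈ ({mn (q+2) 0, mn 0 (q+2)} : Set (MvPolynomial (Fin 2) k)) * Sg q,
        ∃ dg : Fin 2 →₀ ℕ, ¬ dg ≤ dd (q+1) ((q+1)*(q+1)) ∧ g = monomial dg 1 := by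
      rintro g hg
      obtain ⟨s, hs, t, ht, rfl⟩ := Set.mem_mul.1 hg
      obtain ⟨i, j, l, hijl, rfl⟩ := ht
      rcases hs with h | h <;> subst h <;> rw [mn_mul] <;>
        refine ⟨_, ?_, rfl⟩ <;> rw [dd_le_iff] <;> rintro ⟨h1, h2⟩
      · -- x1 factor: a-exponent too big
        have e1 : (q+2) + ((q+2) * i + l) = (q+2) * i + l + (q+2) := by ring
        rw [e1] at h1
        generalize (q+2) * i + l = t at h1
        omega
      · -- x2 factor
        rcases i with _ | i
        · have hjl : j + l = q := by omega
          have e1 : (q+2) * j + l * (q+1) = (j + l) * (q+1) + j := by ring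
          rw [e1, hjl] at h2
          have e2 : (q+1) * (q+1) = q * (q+1) + (q+1) := by ring
          rw [e2] at h2
          generalize q * (q+1) = t at h2
          omega
        · have e1 : (q+2) * (i+1) + l = (q+2) * i + l + (q+2) := by ring
          rw [e1] at h1
          generalize (q+2) * i + l = t at h1
          omega
    have h0 := coeff_zero_of_mem_span hG (hle hmem) (dd (q+1) ((q+1)*(q+1))) le_rfl
    rw [mn_pow] at h0
    have e3 : (q+1) * 1 = q + 1 := by ring
    rw [e3] at h0
    rw [mn] at h0
    rw [coeff_monomial, if_pos rfl] at h0
    exact one_ne_zero h0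
  -- monomial factorization helper
  have hpow_mem : ∀ i j l : ℕ,
      (mn (q+2) 0 : MvPolynomial (Fin 2) k) ^ i * mn 0 (q+2) ^ j * mn 1 (q+1) ^ l ∈ I ^ (i+j+l) := by
    intro i j l
    rw [pow_add, pow_add]
    exact Ideal.mul_mem_mul (Ideal.mul_mem_mul (Ideal.pow_mem_pow hx1I i)
      (Ideal.pow_mem_pow hx2I j)) (Ideal.pow_mem_pow hyI l)
  -- the reduction equality at r = q+1
  have hred : I ^ (q+2) = J * I ^ (q+1) := by
    apply le_antisymm
    · calc I ^ (q+2) ≤ Ideal.span (Sg (q+2)) := hIpow _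
        _ ≤ J * I ^ (q+1) := by
          rw [Ideal.span_le]
          rintro g ⟨i, j, l, hijl, rfl⟩
          have hfac : (mn ((q+2) * i + l) ((q+2) * j + l * (q+1)) : MvPolynomial (Fin 2) k)
              = mn (q+2) 0 ^ i * mn 0 (q+2) ^ j * mn 1 (q+1) ^ l := by
            rw [mn_pow, mn_pow, mn_pow, mn_mul, mn_mul]
            congr 1 <;> ring
          rw [hfac]
          rcases i with _ | i
          · rcases j with _ | j
            · -- pure y power: y^(q+2) = x1 * x2^(q+1)
              have hl : l = q + 2 := by omega
              subst hl
              have e4 : (mn 1 (q+1) : MvPolynomial (Fin 2) k) ^ (q+2)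
                  = mn (q+2) 0 * mn 0 (q+2) ^ (q+1) := by
                rw [mn_pow, mn_pow, mn_mul]
                congr 1 <;> ring
              simp only [pow_zero, one_mul, e4]
              exact Ideal.mul_mem_mul hx1J (Ideal.pow_mem_pow hx2I _)
            · have e5 : (mn (q+2) 0 : MvPolynomial (Fin 2) k) ^ 0 * mn 0 (q+2) ^ (j+1) * mn 1 (q+1) ^ l
                  = mn 0 (q+2) * (mn (q+2) 0 ^ 0 * mn 0 (q+2) ^ j * mn 1 (q+1) ^ l) := by ring
              rw [e5]
              have := hpow_mem 0 j l
              rw [show 0 + j + l = q + 1 by omega] at this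
              exact Ideal.mul_mem_mul hx2J this
          · have e6 : (mn (q+2) 0 : MvPolynomial (Fin 2) k) ^ (i+1) * mn 0 (q+2) ^ j * mn 1 (q+1) ^ l
                = mn (q+2) 0 * (mn (q+2) 0 ^ i * mn 0 (q+2) ^ j * mn 1 (q+1) ^ l) := by ring
            rw [e6]
            have := hpow_mem i j l
            rw [show i + j + l = q + 1 by omega] at this
            exact Ideal.mul_mem_mul hx1J this
    · have hJI : J ≤ I := by
        rw [hJ, hI]
        apply Ideal.span_mono
        intro x hx
        simp only [Set.mem_insert_iff, Set.mem_singleton_iff] at hx ⊢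
        tauto
      calc J * I ^ (q+1) ≤ I * I ^ (q+1) := Ideal.mul_mono_left hJI
        _ = I ^ (q+2) := (pow_succ' I (q+1)).symm
  refine ⟨by rw [hy]; exact hkey, ?_, ?_⟩
  · show I ^ (q + 1 + 1) = J * I ^ (q + 1)
    rw [show q + 1 + 1 = q + 2 from rfl]
    exact hred
  · intro r hr
    by_contra hlt
    push_neg at hlt
    have hrq : r ≤ q := by omega
    have h1 : (mn 1 (q+1) : MvPolynomial (Fin 2) k) ^ (r+1) ∈ J * I ^ r :=
      hr ▸ Ideal.pow_mem_pow hyI (r+1)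
    have h2 : (mn 1 (q+1) : MvPolynomial (Fin 2) k) ^ (q+1) ∈ J * I ^ q := by
      have e7 : (mn 1 (q+1) : MvPolynomial (Fin 2) k) ^ (q+1)
          = mn 1 (q+1) ^ (r+1) * mn 1 (q+1) ^ (q-r) := by
        rw [← pow_add]
        congr 1
        omega
      rw [e7]
      have := Ideal.mul_mem_mul h1 (Ideal.pow_mem_pow hyI (q-r))
      rwa [mul_assoc, ← pow_add, show r + (q-r) = q from by omega] at this
    exact hkey h2
end

section
/- Let R = k[a1, a2] be a polynomial ring over a field, p ≥ 2, x1 = a1^p, x2 = a2^p, y = a1*a2^(p-1), I = (x1, x2, y). Then for every n ≥ 1, (x1) ∩ I^n = x1 * I^(n-1) (where I^0 = R). -/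
/-!
Every ideal in sight is a monomial ideal, so it suffices to compare exponent vectors: a monomial
lying in `(x₁) ∩ I^(n+1)` is a multiple of `x₁` and of some `x₁^i x₂^j y^l` with `i + j + l = n + 1`.
If `i > 0`, or `l ≥ p` so that `y^p = x₁ x₂^(p-1)` can be traded in, this generator is already
`x₁` times a generator of `I^n`. Otherwise `i = 0` and `l < p`, so the `a₂`-exponent
`j p + l (p - 1) = (n + 1) p - l` is at least `n p`, and the monomial is a multiple of `x₁ x₂^n`.
-/

open MvPolynomial Pointwise

namespace MvPolynomial

variable {σ R : Type*} [CommSemiring R]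

theorem span_monomial_image_mul (A B : Set (σ →₀ ℕ)) :
    Ideal.span ((fun s => monomial s (1 : R)) '' A) * Ideal.span ((fun s => monomial s 1) '' B) =
      Ideal.span ((fun s => monomial s 1) '' (A + B)) := by
  rw [Ideal.span_mul_span', ← Set.image2_mul, ← Set.image2_add, Set.image2_image_left,
    Set.image2_image_right, Set.image_image2]
  simp only [monomial_mul, one_mul]

theorem span_monomial_image_pow (A : Set (σ →₀ ℕ)) (n : ℕ) :
    Ideal.span ((fun s => monomial s (1 : R)) '' A) ^ n =
      Ideal.span ((fun s => monomial s 1) '' (n • A)) := by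
  induction n with
  | zero => simp [Ideal.one_eq_top]
  | succ n ih => rw [pow_succ, ih, span_monomial_image_mul, succ_nsmul]

theorem span_monomial_image_inf_le {A B C : Set (σ →₀ ℕ)}
    (h : ∀ w, (∃ a ∈ A, a ≤ w) → (∃ b ∈ B, b ≤ w) → ∃ c ∈ C, c ≤ w) :
    Ideal.span ((fun s => monomial s (1 : R)) '' A) ⊓ Ideal.span ((fun s => monomial s 1) '' B) ≤
      Ideal.span ((fun s => monomial s 1) '' C) := by
  rintro x ⟨hA, hB⟩
  rw [SetLike.mem_coe, mem_ideal_span_monomial_image] at hA hB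
  rw [mem_ideal_span_monomial_image]
  exact fun w hw => h w (hA w hw) (hB w hw)

end MvPolynomial

theorem Set.mem_nsmul_insert_insert_singleton {M : Type*} [AddCommMonoid M] {a b c v : M}
    {n : ℕ} : v ∈ n • ({a, b, c} : Set M) ↔ ∃ i j l, i + j + l = n ∧ v = i • a + j • b + l • c := by
  induction n generalizing v with
  | zero => simp
  | succ n ih =>
    simp only [succ_nsmul, Set.mem_add, ih, Set.mem_insert_iff, Set.mem_singleton_iff]
    constructor
    · rintro ⟨_, ⟨i, j, l, rfl, rfl⟩, _, rfl | rfl | rfl, rfl⟩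
      · exact ⟨i + 1, j, l, by omega, by module⟩
      · exact ⟨i, j + 1, l, by omega, by module⟩
      · exact ⟨i, j, l + 1, by omega, by module⟩
    · rintro ⟨i, j, l, hn, rfl⟩
      rcases i with _ | i
      · rcases j with _ | j
        · rcases l with _ | l
          · omega
          · exact ⟨_, ⟨0, 0, l, by omega, rfl⟩, c, by simp, by module⟩
        · exact ⟨_, ⟨0, j, l, by omega, rfl⟩, b, by simp, by module⟩
      · exact ⟨_, ⟨i, j, l, by omega, rfl⟩, a, by simp, by module⟩

namespace ValabregaValla

open Finsupp

variable (p : ℕ)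

noncomputable def x₁Exp : Fin 2 →₀ ℕ := single 0 p

noncomputable def x₂Exp : Fin 2 →₀ ℕ := single 1 p

noncomputable def yExp : Fin 2 →₀ ℕ := single 0 1 + single 1 (p - 1)

def generatorExps : Set (Fin 2 →₀ ℕ) := {x₁Exp p, x₂Exp p, yExp p}

theorem nsmul_yExp : p • yExp p = x₁Exp p + (p - 1) • x₂Exp p := by
  simp only [yExp, x₁Exp, x₂Exp, smul_add, smul_single, smul_eq_mul, mul_one, mul_comm]

theorem smul_add_smul_add_smul_apply_one (i j l : ℕ) :
    (i • x₁Exp p + j • x₂Exp p + l • yExp p) 1 = j * p + l * (p - 1) := by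
  simp [x₁Exp, x₂Exp, yExp]

variable {p}

theorem exists_mem_nsmul_x₁Exp_add_eq (hp : 0 < p) {n i j l : ℕ} (hn : i + j + l = n + 1)
    (h : 0 < i ∨ p ≤ l) : ∃ u ∈ n • generatorExps p,
      x₁Exp p + u = i • x₁Exp p + j • x₂Exp p + l • yExp p := by
  simp only [generatorExps, Set.mem_nsmul_insert_insert_singleton]
  rcases h with hi | hl
  · refine ⟨_, ⟨i - 1, j, l, by omega, rfl⟩, ?_⟩
    conv_rhs => rw [← Nat.sub_add_cancel hi]
    module
  · refine ⟨_, ⟨i, j + (p - 1), l - p, by omega, rfl⟩, ?_⟩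
    conv_rhs => rw [← Nat.sub_add_cancel hl, add_nsmul, nsmul_yExp]
    module

theorem exists_x₁Exp_add_le (hp : 0 < p) {n : ℕ} {v w : Fin 2 →₀ ℕ}
    (hv : v ∈ (n + 1) • generatorExps p) (hvw : v ≤ w) (hw : x₁Exp p ≤ w) :
    ∃ u ∈ n • generatorExps p, x₁Exp p + u ≤ w := by
  obtain ⟨i, j, l, hn, rfl⟩ := Set.mem_nsmul_insert_insert_singleton.1 hv
  by_cases h : 0 < i ∨ p ≤ l
  · obtain ⟨u, hu, huv⟩ := exists_mem_nsmul_x₁Exp_add_eq hp hn h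
    exact ⟨u, hu, huv ▸ hvw⟩
  · push Not at h
    refine ⟨n • x₂Exp p, Set.mem_nsmul_insert_insert_singleton.2 ⟨0, n, 0, by simp, by simp⟩, ?_⟩
    have h1 : n * p ≤ j * p + l * (p - 1) := by
      obtain ⟨q, rfl⟩ : ∃ q, p = q + 1 := ⟨p - 1, by omega⟩
      simp only [Nat.add_sub_cancel]
      nlinarith
    have h0 : p ≤ w 0 := by simpa [x₁Exp] using hw 0
    have h2 := hvw 1
    rw [smul_add_smul_add_smul_apply_one] at h2
    intro a
    fin_cases a <;> simp [x₁Exp, x₂Exp] <;> omega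

variable (p) {R : Type*} [CommSemiring R]

theorem span_X_zero_pow :
    Ideal.span {X 0 ^ p} = Ideal.span ((fun s => monomial s (1 : R)) '' {x₁Exp p}) := by
  rw [Set.image_singleton, x₁Exp, X_pow_eq_monomial]

theorem span_generators :
    Ideal.span {X 0 ^ p, X 1 ^ p, X 0 * X 1 ^ (p - 1)} =
      Ideal.span ((fun s => monomial s (1 : R)) '' generatorExps p) := by
  rw [X_pow_eq_monomial, X_pow_eq_monomial, X_pow_eq_monomial, X, monomial_mul, one_mul]
  simp only [generatorExps, Set.image_insert_eq, Set.image_singleton, x₁Exp, x₂Exp, yExp]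

end ValabregaValla

open ValabregaValla

/-- In `R = k[a1,a2]`, with `x1 = a1^p`, `x2 = a2^p`, `y = a1*a2^(p-1)`,
`I = (x1,x2,y)`, for every `n ≥ 1` one has `(x1) ∩ I^n = x1*I^(n-1)`. -/
theorem stmt_2 {k : Type*} [Field k] (p : ℕ) (hp : 2 ≤ p)
    (a1 a2 : MvPolynomial (Fin 2) k) (ha1 : a1 = X 0) (ha2 : a2 = X 1)
    (I : Ideal (MvPolynomial (Fin 2) k))
    (hI : I = Ideal.span {a1 ^ p, a2 ^ p, a1 * a2 ^ (p - 1)}) :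
    ∀ n : ℕ, 1 ≤ n →
      Ideal.span {a1 ^ p} ⊓ I ^ n = Ideal.span {a1 ^ p} * I ^ (n - 1) := by
  intro _ hn
  obtain ⟨n, rfl⟩ := Nat.exists_eq_add_of_le' hn
  rw [Nat.add_sub_cancel]
  subst ha1 ha2
  refine le_antisymm ?_ (le_inf Ideal.mul_le_left ?_)
  · rw [hI, span_generators, span_X_zero_pow, span_monomial_image_pow,
      span_monomial_image_pow, span_monomial_image_mul]
    refine span_monomial_image_inf_le fun w ⟨_, hx₁, hw⟩ ⟨v, hv, hvw⟩ => ?_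
    obtain ⟨u, hu, hle⟩ := exists_x₁Exp_add_le (by omega) hv hvw (hx₁ ▸ hw)
    exact ⟨_, Set.add_mem_add rfl hu, hle⟩
  · rw [pow_succ']
    exact Ideal.mul_mono_left (hI ▸ Ideal.span_mono (by simp))
end

section
/- Let R = k[a1, a2] be a polynomial ring over a field, p > 2, x1 = a1^p, x2 = a2^p, y = a1*a2^(p-1), I = (x1, x2, y). Then a1^(p+2)*a2^(p-2) * x2 ∈ I^3 while a1^(p+2)*a2^(p-2) ∈ I \ I^2. In particular the initial form of x2 in the associated graded ring G(I) is a zerodivisor. -/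
open MvPolynomial

/-- In `R = k[a1,a2]` with `p > 2`, `x1 = a1^p`, `x2 = a2^p`,
`y = a1*a2^(p-1)`, `I = (x1,x2,y)`: one has `a1^(p+2)*a2^(p-2)*x2 ∈ I^3` while
`a1^(p+2)*a2^(p-2) ∈ I \ I^2` (so the initial form of `x2` in `G(I)` is a
zerodivisor). -/
theorem stmt_3 {k : Type*} [Field k] (p : ℕ) (hp : 2 < p)
    (a1 a2 : MvPolynomial (Fin 2) k) (ha1 : a1 = X 0) (ha2 : a2 = X 1)
    (I : Ideal (MvPolynomial (Fin 2) k))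
    (hI : I = Ideal.span {a1 ^ p, a2 ^ p, a1 * a2 ^ (p - 1)}) :
    a1 ^ (p + 2) * a2 ^ (p - 2) * a2 ^ p ∈ I ^ 3 ∧
      a1 ^ (p + 2) * a2 ^ (p - 2) ∈ I ∧
      a1 ^ (p + 2) * a2 ^ (p - 2) ∉ I ^ 2 := by
  classical
  obtain ⟨q, rfl⟩ : ∃ q, p = q + 3 := ⟨p - 3, by omega⟩
  subst ha1 ha2 hI
  simp only [show q + 3 - 1 = q + 2 by omega, show q + 3 - 2 = q + 1 by omega,
    show q + 3 + 2 = q + 5 by omega]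
  have hx1 : (X 0 : MvPolynomial (Fin 2) k) ^ (q + 3) ∈
      Ideal.span {(X 0 : MvPolynomial (Fin 2) k) ^ (q + 3), X 1 ^ (q + 3),
        X 0 * X 1 ^ (q + 2)} := Ideal.subset_span (by simp)
  have hy : (X 0 : MvPolynomial (Fin 2) k) * X 1 ^ (q + 2) ∈
      Ideal.span {(X 0 : MvPolynomial (Fin 2) k) ^ (q + 3), X 1 ^ (q + 3),
        X 0 * X 1 ^ (q + 2)} := Ideal.subset_span (by simp)
  refine ⟨?_, ?_, ?_⟩
  · have : (X 0 : MvPolynomial (Fin 2) k) ^ (q + 5) * X 1 ^ (q + 1) * X 1 ^ (q + 3)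
        = (X 0 ^ (q + 3)) * (X 0 * X 1 ^ (q + 2)) * (X 0 * X 1 ^ (q + 2)) := by
      ring
    rw [this, pow_succ, pow_two]
    exact Ideal.mul_mem_mul (Ideal.mul_mem_mul hx1 hy) hy
  · have : (X 0 : MvPolynomial (Fin 2) k) ^ (q + 5) * X 1 ^ (q + 1)
        = (X 0 ^ 2 * X 1 ^ (q + 1)) * (X 0 ^ (q + 3)) := by ring
    rw [this]
    exact Ideal.mul_mem_left _ _ hx1
  · intro hmem
    set s1 : Fin 2 →₀ ℕ := Finsupp.single 0 (q + 3) with hs1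
    set s2 : Fin 2 →₀ ℕ := Finsupp.single 1 (q + 3) with hs2
    set s3 : Fin 2 →₀ ℕ := Finsupp.single 0 1 + Finsupp.single 1 (q + 2) with hs3
    set S6 : Set (Fin 2 →₀ ℕ) :=
      {s1 + s1, s1 + s2, s1 + s3, s2 + s2, s2 + s3, s3 + s3} with hS6
    have hmono : ∀ n m : ℕ, (X 0 : MvPolynomial (Fin 2) k) ^ n * X 1 ^ m
        = monomial (Finsupp.single 0 n + Finsupp.single 1 m) 1 := by
      intro n m
      rw [X_pow_eq_monomial, X_pow_eq_monomial, monomial_mul, one_mul]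
    have hJ : (Ideal.span {(X 0 : MvPolynomial (Fin 2) k) ^ (q + 3), X 1 ^ (q + 3),
        X 0 * X 1 ^ (q + 2)}) ^ 2
        ≤ Ideal.span ((fun s => monomial s (1 : k)) '' S6) := by
      rw [pow_two, Ideal.span_mul_span']
      apply Ideal.span_le.2
      intro x hx
      obtain ⟨a, ha, b, hb, rfl⟩ := Set.mem_mul.1 hx
      have key : ∀ c ∈ ({(X 0 : MvPolynomial (Fin 2) k) ^ (q + 3), X 1 ^ (q + 3),
          X 0 * X 1 ^ (q + 2)} : Set _), ∃ s ∈ ({s1, s2, s3} : Set _),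
          c = monomial s (1 : k) := by
        intro c hc
        rcases hc with rfl | rfl | rfl
        · exact ⟨s1, by simp, by rw [hs1, X_pow_eq_monomial]⟩
        · exact ⟨s2, by simp, by rw [hs2, X_pow_eq_monomial]⟩
        · refine ⟨s3, by simp, ?_⟩
          rw [hs3, ← hmono, pow_one]
      obtain ⟨s, hs, rfl⟩ := key a ha
      obtain ⟨t, ht, rfl⟩ := key b hb
      rw [monomial_mul, one_mul]
      apply Ideal.subset_span
      refine ⟨s + t, ?_, rfl⟩
      rcases hs with rfl | rfl | rfl <;> rcases ht with rfl | rfl | rfl <;>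
        simp [hS6, add_comm]
    have hmem' := hJ hmem
    rw [hmono] at hmem'
    rw [mem_ideal_span_monomial_image] at hmem'
    have hsup := hmem' (Finsupp.single 0 (q + 5) + Finsupp.single 1 (q + 1))
      (by rw [support_monomial]; simp)
    obtain ⟨si, hsi, hle⟩ := hsup
    have h0 := hle 0
    have h1 := hle 1
    rcases hsi with rfl | rfl | rfl | rfl | rfl | rfl <;>
      simp [hs1, hs2, hs3, Finsupp.single_apply] at h0 h1 <;> omega
end

section
/- Let R = k[a1, a2] be a polynomial ring over a field, p ≥ 2, J = (a1^p, a2^p), I = (a1^p, a2^p, a1*a2^(p-1)), y = a1*a2^(p-1). Then for each n with 2 ≤ n ≤ p-1, the colon ideal (J*I^(n-1) : y^n) equals (a1^(p-n), a2). -/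
open MvPolynomial

/-- In `R = k[a1,a2]`, with `J = (a1^p, a2^p)`,
`I = (a1^p, a2^p, a1*a2^(p-1))`, `y = a1*a2^(p-1)`, for `2 ≤ n ≤ p-1` one has
`(J*I^(n-1) : y^n) = (a1^(p-n), a2)`. -/
theorem stmt_4 {k : Type*} [Field k] (p : ℕ) (hp : 2 ≤ p)
    (a1 a2 y : MvPolynomial (Fin 2) k) (ha1 : a1 = X 0) (ha2 : a2 = X 1)
    (hy : y = a1 * a2 ^ (p - 1))
    (I J : Ideal (MvPolynomial (Fin 2) k))
    (hI : I = Ideal.span {a1 ^ p, a2 ^ p, y})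
    (hJ : J = Ideal.span {a1 ^ p, a2 ^ p})
    (n : ℕ) (hn1 : 2 ≤ n) (hn2 : n ≤ p - 1) :
    (J * I ^ (n - 1)).colon (Ideal.span {y ^ n}) =
      Ideal.span {a1 ^ (p - n), a2} := by
  obtain ⟨m, rfl⟩ : ∃ m, n = m + 2 := ⟨n - 2, by omega⟩
  obtain ⟨c, rfl⟩ : ∃ c, p = m + c + 3 := ⟨p - m - 3, by omega⟩
  rw [show m + c + 3 - 1 = m + c + 2 from by omega] at hy
  rw [show m + 2 - 1 = m + 1 from by omega,
    show m + c + 3 - (m + 2) = c + 1 from by omega]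
  have haI : a1 ^ (m + c + 3) ∈ I := by rw [hI]; exact Ideal.subset_span (by simp)
  have hbI : a2 ^ (m + c + 3) ∈ I := by rw [hI]; exact Ideal.subset_span (by simp)
  have hyI : y ∈ I := by rw [hI]; exact Ideal.subset_span (by simp)
  have haJ : a1 ^ (m + c + 3) ∈ J := by rw [hJ]; exact Ideal.subset_span (by simp)
  have hbJ : a2 ^ (m + c + 3) ∈ J := by rw [hJ]; exact Ideal.subset_span (by simp)
  have Ipow : ∀ t : ℕ, I ^ t ≤ Ideal.span {a1 ^ (m + c + 3), a2 ^ (t * (m + c + 2))} := by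
    intro t
    induction t with
    | zero =>
      have h1 : (1 : MvPolynomial (Fin 2) k) ∈
          Ideal.span {a1 ^ (m + c + 3), a2 ^ (0 * (m + c + 2))} :=
        Ideal.subset_span (by simp)
      rw [pow_zero, Ideal.one_eq_top]
      exact le_of_eq ((Ideal.eq_top_iff_one _).mpr h1).symm
    | succ t ih =>
      rw [pow_succ]
      calc I ^ t * I ≤ Ideal.span {a1 ^ (m + c + 3), a2 ^ (t * (m + c + 2))} * I :=
            Ideal.mul_mono_left ih
        _ ≤ _ := by
            rw [hI, Ideal.span_mul_span', Ideal.span_le]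
            rintro x hx
            simp only [Set.mem_mul, Set.mem_insert_iff, Set.mem_singleton_iff] at hx
            obtain ⟨g1, hg1, g2, hg2, rfl⟩ := hx
            rw [SetLike.mem_coe, Ideal.mem_span_pair]
            rcases hg1 with rfl | rfl
            · exact ⟨g2, 0, by ring⟩
            rcases hg2 with rfl | rfl | rfl
            · exact ⟨a2 ^ (t * (m + c + 2)), 0, by ring⟩
            · exact ⟨0, a2, by ring⟩
            · exact ⟨0, a1, by rw [hy]; ring⟩
  have hN : J * I ^ (m + 1) ≤
      Ideal.span {a1 ^ (m + c + 3), a2 ^ ((m + 2) * (m + c + 2) + 1)} := by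
    calc J * I ^ (m + 1)
        ≤ J * Ideal.span {a1 ^ (m + c + 3), a2 ^ ((m + 1) * (m + c + 2))} :=
          Ideal.mul_mono_right (Ipow (m + 1))
      _ ≤ _ := by
          rw [hJ, Ideal.span_mul_span', Ideal.span_le]
          rintro x hx
          simp only [Set.mem_mul, Set.mem_insert_iff, Set.mem_singleton_iff] at hx
          obtain ⟨g1, hg1, g2, hg2, rfl⟩ := hx
          rw [SetLike.mem_coe, Ideal.mem_span_pair]
          rcases hg1 with rfl | rfl
          · exact ⟨g2, 0, by ring⟩
          rcases hg2 with rfl | rfl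
          · exact ⟨a2 ^ (m + c + 3), 0, by ring⟩
          · exact ⟨0, 1, by ring⟩
  apply le_antisymm
  · intro r hr
    rw [Ideal.mem_colon_span_singleton] at hr
    have hrN := hN hr
    have hyn : y ^ (m + 2) = monomial
        (Finsupp.single 0 (m + 2) + Finsupp.single 1 ((m + 2) * (m + c + 2))) (1 : k) := by
      rw [hy, ha1, ha2, mul_pow, ← pow_mul, mul_comm (m + c + 2) (m + 2),
        X_pow_eq_monomial, X_pow_eq_monomial, monomial_mul, mul_one]
    have hNm : Ideal.span {a1 ^ (m + c + 3), a2 ^ ((m + 2) * (m + c + 2) + 1)} =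
        Ideal.span ((fun s => monomial s (1 : k)) ''
          {Finsupp.single 0 (m + c + 3), Finsupp.single 1 ((m + 2) * (m + c + 2) + 1)}) := by
      rw [Set.image_insert_eq, Set.image_singleton, ha1, ha2, X_pow_eq_monomial,
        X_pow_eq_monomial]
    rw [hNm] at hrN
    have hgoal : Ideal.span {a1 ^ (c + 1), a2} =
        Ideal.span ((fun s => monomial s (1 : k)) ''
          {Finsupp.single 0 (c + 1), Finsupp.single 1 1}) := by
      rw [Set.image_insert_eq, Set.image_singleton, ha1, ha2, X_pow_eq_monomial,
        ← pow_one (X 1 : MvPolynomial (Fin 2) k), X_pow_eq_monomial]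
    rw [hgoal, mem_ideal_span_monomial_image]
    intro xi hxi
    have hx2 : xi + (Finsupp.single 0 (m + 2) +
        Finsupp.single 1 ((m + 2) * (m + c + 2))) ∈ (r * y ^ (m + 2)).support := by
      rw [hyn, mem_support_iff, coeff_mul_monomial, mul_one]
      exact mem_support_iff.mp hxi
    obtain ⟨si, hsi, hle⟩ := mem_ideal_span_monomial_image.mp hrN _ hx2
    simp only [Set.mem_insert_iff, Set.mem_singleton_iff] at hsi
    rcases hsi with rfl | rfl
    · refine ⟨Finsupp.single 0 (c + 1), by simp, ?_⟩
      rw [Finsupp.single_le_iff]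
      have h0 := (Finsupp.le_def.mp hle) 0
      simp [Finsupp.single_apply] at h0
      omega
    · refine ⟨Finsupp.single 1 1, by simp, ?_⟩
      rw [Finsupp.single_le_iff]
      have h1 := (Finsupp.le_def.mp hle) 1
      simp [Finsupp.single_apply] at h1
      generalize hE : (m + 2) * (m + c + 2) = E at h1
      omega
  · rw [Ideal.span_le]
    rintro x hx
    simp only [Set.mem_insert_iff, Set.mem_singleton_iff] at hx
    rw [SetLike.mem_coe, Ideal.mem_colon_span_singleton]
    rcases hx with h | h <;> rw [h]
    · have key : a1 ^ (c + 1) * y ^ (m + 2) =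
          a2 ^ (c + 1) * (a1 ^ (m + c + 3) * (a2 ^ (m + c + 3)) ^ (m + 1)) := by
        rw [hy]; ring
      rw [key]
      exact Ideal.mul_mem_left _ _ (Ideal.mul_mem_mul haJ (Ideal.pow_mem_pow hbI (m + 1)))
    · have key : a2 * y ^ (m + 2) = a1 * (a2 ^ (m + c + 3) * y ^ (m + 1)) := by
        rw [hy]; ring
      rw [key]
      exact Ideal.mul_mem_left _ _ (Ideal.mul_mem_mul hbJ (Ideal.pow_mem_pow hyI (m + 1)))
end

section
/- Let R = k[a1, a2] be a polynomial ring over a field, p ≥ 2, J = (a1^p, a2^p), y = a1*a2^(p-1), and for 2 ≤ n ≤ p-1 let I = (a1^p, a2^p, y). Then a1^(p-n-1) ∉ (J*I^(n-1) : y^n). -/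
open MvPolynomial

/-- The monomial ideal with exponents `a1^p` and `a1^l a2^(p*m - l)` for `l ≤ c`. -/
def mySet (p c m : ℕ) : Set (Fin 2 →₀ ℕ) :=
  insert (Finsupp.single 0 p)
    {e | ∃ l ≤ c, e = Finsupp.single 0 l + Finsupp.single 1 (p * m - l)}

lemma mono_add_mem {k : Type*} [Field k] {T : Ideal (MvPolynomial (Fin 2) k)}
    {s t : Fin 2 →₀ ℕ} (h : monomial s (1 : k) ∈ T) : monomial (s + t) (1 : k) ∈ T := by
  have he : monomial (s + t) (1 : k) = monomial s 1 * monomial t 1 := by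
    rw [monomial_mul, one_mul]
  rw [he]; exact Ideal.mul_mem_right _ _ h

lemma aux_pow_le {k : Type*} [Field k] (p : ℕ) (hp : 1 ≤ p) (m : ℕ) :
    (Ideal.span {X 0 ^ p, X 1 ^ p, X 0 * X 1 ^ (p - 1)} :
        Ideal (MvPolynomial (Fin 2) k)) ^ m ≤
      Ideal.span ((fun e => monomial e (1 : k)) '' mySet p m m) := by
  induction m with
  | zero =>
      rw [pow_zero, Ideal.one_eq_top, top_le_iff, Ideal.eq_top_iff_one]
      have h0 : ((0 : Fin 2 →₀ ℕ)) ∈ mySet p 0 0 := by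
        right
        exact ⟨0, le_refl 0, by simp⟩
      have := Ideal.subset_span (Set.mem_image_of_mem (fun e => monomial e (1 : k)) h0)
      simpa using this
  | succ m ih =>
      rw [pow_succ]
      refine le_trans (Ideal.mul_mono_left ih) ?_
      rw [Ideal.span_mul_span']
      rw [Ideal.span_le]
      rintro z ⟨a, ha, b, hb, rfl⟩
      obtain ⟨e, he, rfl⟩ := ha
      rcases he with he | ⟨l, hl, rfl⟩
      · -- a = monomial (single 0 p) 1, a generator of the target
        subst he
        have : (monomial (Finsupp.single (0 : Fin 2) p) (1 : k)) ∈
            Ideal.span ((fun e => monomial e (1 : k)) '' mySet p (m + 1) (m + 1)) :=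
          Ideal.subset_span (Set.mem_image_of_mem _ (Set.mem_insert _ _))
        exact Ideal.mul_mem_right _ _ this
      · -- a = monomial (single 0 l + single 1 (p*m - l)) 1
        have hlm : l ≤ p * m := le_trans hl (Nat.le_mul_of_pos_left m hp)
        rcases hb with hb | hb | hb
        · -- b = X 0 ^ p
          subst hb
          simp only [X_pow_eq_monomial, monomial_mul, one_mul]
          have : (monomial (Finsupp.single (0 : Fin 2) p) (1 : k)) ∈
              Ideal.span ((fun e => monomial e (1 : k)) '' mySet p (m + 1) (m + 1)) :=
            Ideal.subset_span (Set.mem_image_of_mem _ (Set.mem_insert _ _))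
          have heq : Finsupp.single (0 : Fin 2) l + Finsupp.single 1 (p * m - l) +
              Finsupp.single 0 p =
              Finsupp.single (0 : Fin 2) p +
                (Finsupp.single 0 l + Finsupp.single 1 (p * m - l)) := by
            abel
          rw [heq]
          exact mono_add_mem this
        · -- b = X 1 ^ p
          subst hb
          simp only [X_pow_eq_monomial, monomial_mul, one_mul]
          apply Ideal.subset_span
          refine Set.mem_image_of_mem _ ?_
          right
          refine ⟨l, le_trans hl (Nat.le_succ m), ?_⟩
          have h2 : p * m - l + p = p * (m + 1) - l := by
            rw [Nat.mul_succ]; omega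
          rw [add_assoc, ← Finsupp.single_add, h2]
        · -- b = X 0 * X 1 ^ (p - 1)
          subst hb
          rw [X_pow_eq_monomial]
          have hX0 : (X (0 : Fin 2) : MvPolynomial (Fin 2) k) =
              monomial (Finsupp.single 0 1) 1 := by
            rw [← X_pow_eq_monomial, pow_one]
          beta_reduce
          rw [hX0, monomial_mul, monomial_mul, one_mul, one_mul]
          apply Ideal.subset_span
          refine Set.mem_image_of_mem _ ?_
          right
          refine ⟨l + 1, by omega, ?_⟩
          have h2 : p * m - l + (p - 1) = p * (m + 1) - (l + 1) := by
            rw [Nat.mul_succ]; omega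
          have heq : Finsupp.single (0 : Fin 2) l + Finsupp.single 1 (p * m - l) +
              (Finsupp.single 0 1 + Finsupp.single 1 (p - 1)) =
              Finsupp.single (0 : Fin 2) (l + 1) +
                Finsupp.single 1 (p * m - l + (p - 1)) := by
            rw [Finsupp.single_add, Finsupp.single_add]; abel
          rw [heq, h2]

/-- In `R = k[a1,a2]`, with `J = (a1^p, a2^p)`, `y = a1*a2^(p-1)`,
`I = (a1^p, a2^p, y)`, for `2 ≤ n ≤ p-1` one has `a1^(p-n-1) ∉ (J*I^(n-1) : y^n)`. -/
theorem stmt_5 {k : Type*} [Field k] (p : ℕ) (hp : 2 ≤ p)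
    (a1 a2 y : MvPolynomial (Fin 2) k) (ha1 : a1 = X 0) (ha2 : a2 = X 1)
    (hy : y = a1 * a2 ^ (p - 1))
    (I J : Ideal (MvPolynomial (Fin 2) k))
    (hI : I = Ideal.span {a1 ^ p, a2 ^ p, y})
    (hJ : J = Ideal.span {a1 ^ p, a2 ^ p})
    (n : ℕ) (hn1 : 2 ≤ n) (hn2 : n ≤ p - 1) :
    a1 ^ (p - n - 1) ∉ (J * I ^ (n - 1)).colon (Ideal.span {y ^ n}) := by
  classical
  subst ha1 ha2 hy hI hJ
  intro hmem
  rw [Ideal.mem_colon_span_singleton] at hmem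
  -- the product is the monomial a1^(p-1) a2^(n*(p-1))
  have hp1 : 1 ≤ p := le_trans (by norm_num) hp
  -- Step 1: J * I^(n-1) ≤ the monomial ideal K
  set K : Ideal (MvPolynomial (Fin 2) k) :=
    Ideal.span ((fun e => monomial e (1 : k)) '' mySet p (n - 1) n) with hK
  have hle : Ideal.span {X (0 : Fin 2) ^ p, X 1 ^ p} *
      (Ideal.span {X (0 : Fin 2) ^ p, X 1 ^ p, X 0 * X 1 ^ (p - 1)}) ^ (n - 1) ≤ K := by
    refine le_trans (Ideal.mul_mono_right (aux_pow_le p hp1 (n - 1))) ?_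
    rw [Ideal.span_mul_span', Ideal.span_le]
    rintro z ⟨a, ha, b, hb, rfl⟩
    beta_reduce
    have hX0 : (monomial (Finsupp.single (0 : Fin 2) p) (1 : k)) ∈ K :=
      Ideal.subset_span (Set.mem_image_of_mem _ (Set.mem_insert _ _))
    rcases ha with ha | ha
    · subst ha
      rw [X_pow_eq_monomial]
      exact Ideal.mul_mem_right _ _ hX0
    · obtain ⟨e, he, rfl⟩ := hb
      rcases he with he | ⟨l, hl, rfl⟩
      · subst he ha
        simp only [X_pow_eq_monomial, monomial_mul, one_mul]
        have heq : Finsupp.single (1 : Fin 2) p + Finsupp.single 0 p =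
            Finsupp.single (0 : Fin 2) p + Finsupp.single 1 p := by abel
        rw [heq]
        exact mono_add_mem hX0
      · subst ha
        have hlm : l ≤ p * (n - 1) := le_trans hl (Nat.le_mul_of_pos_left _ hp1)
        simp only [X_pow_eq_monomial, monomial_mul, one_mul]
        apply Ideal.subset_span
        refine Set.mem_image_of_mem _ ?_
        right
        refine ⟨l, hl, ?_⟩
        have h2 : p * (n - 1) - l + p = p * n - l := by
          have e : n - 1 + 1 = n := by omega
          have h3 : p * (n - 1) + p = p * n := by
            calc p * (n - 1) + p = p * (n - 1 + 1) := by ring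
              _ = p * n := by rw [e]
          omega
        have heq : Finsupp.single (1 : Fin 2) p +
            (Finsupp.single (0 : Fin 2) l + Finsupp.single 1 (p * (n - 1) - l)) =
            Finsupp.single (0 : Fin 2) l + Finsupp.single 1 (p * (n - 1) - l + p) := by
          rw [Finsupp.single_add]; abel
        rw [heq, h2]
  have hmemK := hle hmem
  -- Step 2: rewrite the element as a monomial
  have hprod : X (0 : Fin 2) ^ (p - n - 1) * (X 0 * X 1 ^ (p - 1) : MvPolynomial (Fin 2) k) ^ n =
      monomial (Finsupp.single 0 (p - 1) + Finsupp.single 1 (p * n - n)) (1 : k) := by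
    have e1 : p - n - 1 + n = p - 1 := by omega
    have e2 : (p - 1) * n = p * n - n := by rw [Nat.sub_mul, one_mul]
    rw [mul_pow, ← pow_mul, ← mul_assoc, ← pow_add, e1, e2, X_pow_eq_monomial,
      X_pow_eq_monomial, monomial_mul, one_mul]
  rw [hprod] at hmemK
  rw [mem_ideal_span_monomial_image] at hmemK
  have hsupp : (Finsupp.single (0 : Fin 2) (p - 1) + Finsupp.single 1 (p * n - n)) ∈
      (monomial (Finsupp.single (0 : Fin 2) (p - 1) + Finsupp.single 1 (p * n - n))
        (1 : k)).support := by
    rw [support_monomial, if_neg one_ne_zero]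
    exact Finset.mem_singleton_self _
  obtain ⟨e, he, hle'⟩ := hmemK _ hsupp
  rw [Finsupp.le_def] at hle'
  have hn' : n ≤ p * n := Nat.le_mul_of_pos_left _ hp1
  rcases he with he | ⟨l, hl, rfl⟩
  · subst he
    have h0 := hle' 0
    simp [Finsupp.single_apply] at h0
    omega
  · have h1 := hle' 1
    simp [Finsupp.single_apply, Finsupp.add_apply] at h1
    omega
end

section
/- Let R be a commutative Noetherian local ring and J ⊆ I ideals with x1,...,xs a generating sequence of J such that x1,...,xs is a regular sequence. Set J_i = (x1,...,x_i). If for all i = 1,...,s-1 and all n ≥ 1 one has J_i ∩ I^n = J_i * I^(n-1), then for all i = 1,...,s and all n ≥ 2, ((J_{i-1}*I^(n-1)) : x_i) ∩ I^(n-1) = J_{i-1}*I^(n-2). -/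
/-- The ideal generated by the first `i` elements of the sequence `x`. -/
def firstIdeal {R : Type*} [CommRing R] {s : ℕ} (x : Fin s → R) (i : ℕ) : Ideal R :=
  Ideal.span (x '' {j : Fin s | (j : ℕ) < i})

/-!
If `a * x_i ∈ J_{i-1} * I^(n-1) ⊆ J_{i-1}`, regularity of `x_i` modulo `J_{i-1}` gives
`a ∈ J_{i-1}`; for `a ∈ I^(n-1)` the Valabrega–Valla identity
`J_{i-1} ∩ I^(n-1) = J_{i-1} * I^(n-2)` (trivial for `i = 1`, where `J_0 = 0`) finishes.
The reverse inclusion only needs `x_i ∈ I`.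
-/

namespace Ideal

variable {R : Type*} [CommRing R]

theorem colon_mul_pow_succ_inf_pow_succ {K I : Ideal R} {y : R} {m : ℕ} (hy : y ∈ I)
    (hreg : ∀ r : R, r * y ∈ K → r ∈ K) (hVV : K ⊓ I ^ (m + 1) = K * I ^ m) :
    (K * I ^ (m + 1)).colon (span {y}) ⊓ I ^ (m + 1) = K * I ^ m := by
  apply le_antisymm
  · intro a ha
    obtain ⟨hcolon, hpow⟩ := mem_inf.mp ha
    have hay : a * y ∈ K :=
      (mul_le_left : K * I ^ (m + 1) ≤ K) (mem_colon_span_singleton.mp hcolon)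
    rw [← hVV]
    exact mem_inf.mpr ⟨hreg a hay, hpow⟩
  · intro a ha
    have hpow : a ∈ I ^ (m + 1) := (mem_inf.mp (hVV ▸ ha : a ∈ K ⊓ I ^ (m + 1))).2
    refine mem_inf.mpr ⟨mem_colon_span_singleton.mpr ?_, hpow⟩
    rw [pow_succ, ← mul_assoc]
    exact mul_mem_mul ha hy

end Ideal

theorem firstIdeal_zero {R : Type*} [CommRing R] {s : ℕ} (x : Fin s → R) :
    firstIdeal x 0 = ⊥ := by
  simp [firstIdeal]

/-- `R` Noetherian local, `J ⊆ I`, `x1,…,xs` a regular sequence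
generating `J`; if `J_i ∩ I^n = J_i*I^(n-1)` for `1 ≤ i ≤ s-1`, `n ≥ 1`, then
`((J_{i-1}*I^(n-1)) : x_i) ∩ I^(n-1) = J_{i-1}*I^(n-2)` for `1 ≤ i ≤ s`, `n ≥ 2`. -/
theorem stmt_8 {R : Type*} [CommRing R]
    (I J : Ideal R) (hJI : J ≤ I) (s : ℕ) (x : Fin s → R)
    (hgen : J = Ideal.span (Set.range x))
    (hreg : ∀ i : Fin s, ∀ r : R,
      r * x i ∈ firstIdeal x i → r ∈ firstIdeal x i)
    (hVV : ∀ i : ℕ, 1 ≤ i → i ≤ s - 1 → ∀ n : ℕ, 1 ≤ n →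
      firstIdeal x i ⊓ I ^ n = firstIdeal x i * I ^ (n - 1)) :
    ∀ i : ℕ, ∀ hi1 : 1 ≤ i, ∀ hi2 : i ≤ s, ∀ n : ℕ, 2 ≤ n →
      (firstIdeal x (i - 1) * I ^ (n - 1)).colon
          (Ideal.span {x ⟨i - 1, by omega⟩}) ⊓ I ^ (n - 1) =
        firstIdeal x (i - 1) * I ^ (n - 2) := by
  intro i hi1 hi2 n hn
  obtain ⟨m, rfl⟩ : ∃ m, n = m + 2 := ⟨n - 2, by omega⟩
  have hxI : x ⟨i - 1, by omega⟩ ∈ I := hJI (hgen ▸ Ideal.subset_span (Set.mem_range_self _))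
  have hVV_pred : firstIdeal x (i - 1) ⊓ I ^ (m + 1) = firstIdeal x (i - 1) * I ^ m := by
    rcases Nat.lt_or_ge i 2 with hi | hi
    · rw [show i - 1 = 0 by omega, firstIdeal_zero, bot_inf_eq, Ideal.bot_mul]
    · exact hVV (i - 1) (by omega) (by omega) (m + 1) (by omega)
  exact Ideal.colon_mul_pow_succ_inf_pow_succ hxI (hreg ⟨i - 1, by omega⟩) hVV_pred
end

section
/- Let R be a commutative Noetherian local ring, I an ideal, and x1,...,xs an R-regular sequence contained in I with J_i = (x1,...,x_i), and suppose J_i ∩ I^r = J_i*I^(r-1) for all i = 1,...,s-1 (for a fixed r ≥ 1). Then for all i = 1,...,s: (J_{i-1}*I^r : x_i) ∩ I^r = J_{i-1}*I^(r-1). -/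
/-! If `a ∈ (J I^r : y) ∩ I^r` then `a y ∈ J`, so `a ∈ J` because `y` is regular modulo `J`;
hence `a ∈ J ∩ I^r = J I^(r-1)`. Conversely `J I^(r-1) ⊆ I^r` and `J I^(r-1) y ⊆ J I^r` as soon as
`J ⊆ I` and `y ∈ I`. For `J = J_{i-1}` and `y = x_i` this is the theorem; when `i = 1` the ideal
`J_0` is zero and the intersection hypothesis holds trivially. -/

namespace Ideal

variable {R : Type*} [CommSemiring R] {I J : Ideal R} {r : ℕ}

theorem mul_pow_pred_le_pow (hJI : J ≤ I) (hr : 1 ≤ r) : J * I ^ (r - 1) ≤ I ^ r :=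
  calc J * I ^ (r - 1) ≤ I * I ^ (r - 1) := mul_mono_left hJI
    _ = I ^ r := by rw [← pow_succ', Nat.sub_add_cancel hr]

theorem mul_pow_pred_le_colon {y : R} (hy : y ∈ I) (hr : 1 ≤ r) :
    J * I ^ (r - 1) ≤ (J * I ^ r).colon (span {y}) := fun a ha ↦ by
  rw [mem_colon_span_singleton, ← Nat.sub_add_cancel hr, pow_succ, ← mul_assoc]
  exact mul_mem_mul ha hy

theorem colon_mul_pow_inf_pow_eq {y : R} (hJI : J ≤ I) (hy : y ∈ I) (hr : 1 ≤ r)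
    (hreg : ∀ a, a * y ∈ J → a ∈ J) (hJ : J ⊓ I ^ r = J * I ^ (r - 1)) :
    (J * I ^ r).colon (span {y}) ⊓ I ^ r = J * I ^ (r - 1) := by
  refine le_antisymm ?_ (le_inf (mul_pow_pred_le_colon hy hr) (mul_pow_pred_le_pow hJI hr))
  rintro a ⟨ha, haI⟩
  rw [SetLike.mem_coe, mem_colon_span_singleton] at ha
  rw [← hJ]
  exact ⟨hreg a (mul_le_left ha), haI⟩

end Ideal

theorem firstIdeal_le {R : Type*} [CommRing R] {s : ℕ} {x : Fin s → R} {I : Ideal R}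
    (hxI : ∀ j, x j ∈ I) (i : ℕ) : firstIdeal x i ≤ I := by
  rw [firstIdeal, Ideal.span_le]
  rintro _ ⟨j, -, rfl⟩
  exact hxI j

/-- `R` Noetherian local, `x1,…,xs` a regular sequence contained in
`I`, and suppose `J_i ∩ I^r = J_i*I^(r-1)` for `1 ≤ i ≤ s-1` (fixed `r ≥ 1`).
Then `(J_{i-1}*I^r : x_i) ∩ I^r = J_{i-1}*I^(r-1)` for all `1 ≤ i ≤ s`. -/
theorem stmt_10 {R : Type*} [CommRing R]
    (I : Ideal R) (s : ℕ) (x : Fin s → R) (hxI : ∀ i, x i ∈ I)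
    (hreg : ∀ i : Fin s, ∀ r : R,
      r * x i ∈ firstIdeal x i → r ∈ firstIdeal x i)
    (r : ℕ) (hr : 1 ≤ r)
    (hVV : ∀ i : ℕ, 1 ≤ i → i ≤ s - 1 →
      firstIdeal x i ⊓ I ^ r = firstIdeal x i * I ^ (r - 1)) :
    ∀ i : ℕ, ∀ hi1 : 1 ≤ i, ∀ hi2 : i ≤ s,
      (firstIdeal x (i - 1) * I ^ r).colon (Ideal.span {x ⟨i - 1, by omega⟩}) ⊓ I ^ r =
        firstIdeal x (i - 1) * I ^ (r - 1) := by
  intro i hi1 hi2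
  have hJ : firstIdeal x (i - 1) ⊓ I ^ r = firstIdeal x (i - 1) * I ^ (r - 1) := by
    rcases Nat.eq_zero_or_pos (i - 1) with h | h
    · simp [h, firstIdeal_zero]
    · exact hVV (i - 1) h (by omega)
  exact Ideal.colon_mul_pow_inf_pow_eq (firstIdeal_le hxI _) (hxI _) hr
    (hreg ⟨i - 1, by omega⟩) hJ
end

section
/- Let k be a field and ψ: k[T_0,...,T_p] → k[X,Y] the k-algebra map sending T_i to X^(p-i)*Y^i. Then the kernel of ψ restricted to homogeneous polynomials of degree 2 in the T_i is a k-vector space of dimension p(p-1)/2. -/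
/-!
Restricted to quadratic forms, `ψ` maps the space of degree-2 forms in `p + 1` variables, of
dimension `(p + 2).choose 2`, onto the space of binary forms of degree `2p`, of dimension
`2p + 1`: the monomial `X^(2p-b) Y^b` is the image of `T_i T_j` for any `i + j = b`, `i, j ≤ p`.
Rank–nullity then leaves a kernel of dimension `(p + 2).choose 2 - (2p + 1) = p.choose 2`.
-/

open MvPolynomial Module

theorem Nat.multichoose_two_succ (n : ℕ) : (n + 1).multichoose 2 = n.choose 2 + (2 * n + 1) := by
  rw [Nat.multichoose_eq, show n + 1 + 2 - 1 = n + 2 by omega, Nat.choose_succ_succ',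
    Nat.choose_succ_succ' n 1, Nat.choose_one_right, Nat.choose_one_right]
  ring

theorem Submodule.finrank_map_add_finrank_inf_ker {K V V₂ : Type*} [DivisionRing K]
    [AddCommGroup V] [Module K V] [AddCommGroup V₂] [Module K V₂]
    (W : Submodule K V) [FiniteDimensional K W] (f : V →ₗ[K] V₂) :
    finrank K (W.map f) + finrank K ↥(W ⊓ LinearMap.ker f) = finrank K W := by
  have hker : LinearMap.ker (f.domRestrict W) = (W ⊓ LinearMap.ker f).comap W.subtype := by
    rw [LinearMap.ker_domRestrict, Submodule.comap_inf, Submodule.comap_subtype_self, top_inf_eq]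
  rw [← LinearMap.range_domRestrict, ← (f.domRestrict W).finrank_range_add_finrank_ker, hker,
    (Submodule.comapSubtypeEquivOfLe inf_le_left).finrank_eq]

namespace MvPolynomial

theorem finrank_homogeneousSubmodule (σ R : Type*) [Finite σ] [CommRing R] [Nontrivial R]
    (n : ℕ) : finrank R (homogeneousSubmodule σ R n) = (Nat.card σ).multichoose n := by
  classical
  rw [homogeneousSubmodule_eq_finsupp_supported, ← Sym.natCard_sym_eq_multichoose]
  refine (finrank_eq_nat_card_basis (basisRestrictSupport R _)).trans (Nat.card_congr ?_)
  exact ((Sym.equivNatSum σ n).trans (Equiv.subtypeEquivRight fun _ => Iff.rfl)).symm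

theorem monomial_one_fin_two {R : Type*} [CommSemiring R] (d : Fin 2 →₀ ℕ) :
    monomial d (1 : R) = X 0 ^ d 0 * X 1 ^ d 1 := by
  rw [monomial_eq, C_1, one_mul, Finsupp.prod_fintype _ _ (fun _ => pow_zero _), Fin.prod_univ_two]

section RationalNormalCurve

variable (R : Type*) [CommSemiring R]

/-- Its kernel is the ideal of the rational normal curve of degree `p`. -/
noncomputable def rationalNormalCurve (p : ℕ) :
    MvPolynomial (Fin (p + 1)) R →ₐ[R] MvPolynomial (Fin 2) R :=
  aeval fun i => X 0 ^ (p - (i : ℕ)) * X 1 ^ (i : ℕ)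

variable {R}

theorem rationalNormalCurve_X_mul_X {p : ℕ} (i j : Fin (p + 1)) :
    rationalNormalCurve R p (X i * X j) = X 0 ^ (2 * p - (i + j : ℕ)) * X 1 ^ (i + j : ℕ) := by
  have hi := i.is_le
  have hj := j.is_le
  rw [map_mul, rationalNormalCurve, aeval_X, aeval_X, mul_mul_mul_comm, ← pow_add, ← pow_add]
  congr 2
  omega

theorem X_pow_mul_X_pow_mem_map_rationalNormalCurve {p b : ℕ} (hb : b ≤ 2 * p) :
    X 0 ^ (2 * p - b) * X 1 ^ b ∈
      (homogeneousSubmodule (Fin (p + 1)) R 2).map (rationalNormalCurve R p).toLinearMap := by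
  let i : Fin (p + 1) := ⟨min b p, by omega⟩
  let j : Fin (p + 1) := ⟨b - min b p, by omega⟩
  refine ⟨X i * X j, (isHomogeneous_X R i).mul (isHomogeneous_X R j), ?_⟩
  have hij : (i + j : ℕ) = b := by simp only [i, j]; omega
  rw [AlgHom.toLinearMap_apply, rationalNormalCurve_X_mul_X, hij]

theorem map_rationalNormalCurve_homogeneousSubmodule_two (p : ℕ) :
    (homogeneousSubmodule (Fin (p + 1)) R 2).map (rationalNormalCurve R p).toLinearMap =
      homogeneousSubmodule (Fin 2) R (2 * p) := by
  apply le_antisymm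
  · rw [Submodule.map_le_iff_le_comap]
    intro φ (hφ : φ.IsHomogeneous 2)
    rw [Submodule.mem_comap, AlgHom.toLinearMap_apply, mem_homogeneousSubmodule, mul_comm]
    refine hφ.aeval _ fun i => ?_
    have := (isHomogeneous_X_pow (R := R) (0 : Fin 2) (p - i)).mul (isHomogeneous_X_pow 1 i)
    rwa [Nat.sub_add_cancel i.is_le] at this
  · rw [homogeneousSubmodule_eq_finsupp_supported, AddMonoidAlgebra.supported_eq_span_single,
      Submodule.span_le]
    rintro _ ⟨d, hd, rfl⟩
    have hd : d 0 + d 1 = 2 * p := by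
      rw [← Fin.sum_univ_two, ← Finsupp.degree_eq_sum]; exact hd
    change monomial d 1 ∈ _
    rw [monomial_one_fin_two, show d 0 = 2 * p - d 1 by omega]
    exact X_pow_mul_X_pow_mem_map_rationalNormalCurve (by omega)

theorem finrank_homogeneousSubmodule_two_inf_ker_rationalNormalCurve (K : Type*) [Field K]
    (p : ℕ) :
    finrank K ↥(homogeneousSubmodule (Fin (p + 1)) K 2 ⊓
        LinearMap.ker (rationalNormalCurve K p).toLinearMap) = p.choose 2 := by
  have : FiniteDimensional K (homogeneousSubmodule (Fin (p + 1)) K 2) :=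
    Module.Finite.iff_fg.mpr (homogeneousSubmodule_fg _ _ 2)
  have h := (homogeneousSubmodule (Fin (p + 1)) K 2).finrank_map_add_finrank_inf_ker
    (rationalNormalCurve K p).toLinearMap
  rw [map_rationalNormalCurve_homogeneousSubmodule_two, finrank_homogeneousSubmodule,
    finrank_homogeneousSubmodule, Nat.card_fin, Nat.card_fin, Nat.multichoose_two,
    Nat.multichoose_two_succ] at h
  omega

end RationalNormalCurve

end MvPolynomial

/-- For the `k`-algebra map `ψ : k[T_0,…,T_p] → k[X,Y]`,
`T_i ↦ X^(p-i)*Y^i`, the kernel of `ψ` restricted to homogeneous polynomials of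
degree 2 is a `k`-vector space of dimension `p(p-1)/2`. -/
theorem stmt_15 {k : Type*} [Field k] (p : ℕ)
    (ψ : MvPolynomial (Fin (p + 1)) k →ₐ[k] MvPolynomial (Fin 2) k)
    (hψ : ψ = aeval (fun i : Fin (p + 1) =>
      (X 0 : MvPolynomial (Fin 2) k) ^ (p - (i : ℕ)) * (X 1) ^ (i : ℕ))) :
    Module.finrank k
        ((homogeneousSubmodule (Fin (p + 1)) k 2) ⊓
          (LinearMap.ker ψ.toLinearMap) : Submodule k (MvPolynomial (Fin (p + 1)) k)) =
      p * (p - 1) / 2 := by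
  subst hψ
  rw [← Nat.choose_two_right]
  exact finrank_homogeneousSubmodule_two_inf_ker_rationalNormalCurve k p
end

section
/- Let R be a commutative Noetherian local ring, I an ideal minimally generated by x1,...,xs,y with x1,...,xs a regular sequence, and J = (x1,...,xs). For n ≥ 2, the map sending w ∈ I^(n-1) ∩ (J*I^(n-1) : y), written w = a*y^(n-1) + b with b ∈ J*I^(n-2), to the class of a, induces a well-defined isomorphism of R-modules (I^(n-1) ∩ (J*I^(n-1) : y))/(J*I^(n-2)) ≅ (J*I^(n-1) : y^n)/(J*I^(n-2) : y^(n-1)). -/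
/-!
Since `I^(n-1) = y^(n-1) R + J I^(n-2)`, every `w ∈ I^(n-1) ∩ (J I^(n-1) : y)` can be written
`w = a y^(n-1) + b` with `b ∈ J I^(n-2)`, and then `a y^n = w y - b y ∈ J I^(n-1)`. Hence
multiplication by `y^(n-1)` maps `(J I^(n-1) : y^n)` onto
`(I^(n-1) ∩ (J I^(n-1) : y)) / J I^(n-2)`, with kernel `(J I^(n-2) : y^(n-1))`.
-/

namespace Ideal

variable {R : Type*} [CommRing R]

theorem sup_span_singleton_pow_succ_le (J : Ideal R) (y : R) (m : ℕ) :
    (J ⊔ span {y}) ^ (m + 1) ≤ span {y ^ (m + 1)} ⊔ J * (J ⊔ span {y}) ^ m := by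
  set I := J ⊔ span {y}
  induction m with
  | zero => simp [I, sup_comm]
  | succ m ih =>
    have hy : y ∈ I := mem_sup_right (mem_span_singleton_self y)
    calc I ^ (m + 1 + 1) = I * I ^ (m + 1) := pow_succ' I (m + 1)
      _ ≤ I * (span {y ^ (m + 1)} ⊔ J * I ^ m) := mul_mono_right ih
      _ = J * span {y ^ (m + 1)} ⊔ span {y ^ (m + 1 + 1)} ⊔ J * I ^ (m + 1) := by
        rw [mul_sup, sup_mul, span_singleton_mul_span_singleton, mul_left_comm, ← pow_succ',
          ← pow_succ']
      _ ≤ span {y ^ (m + 1 + 1)} ⊔ J * I ^ (m + 1) :=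
        sup_le (sup_le (le_sup_of_le_right (mul_mono_right
          ((span_singleton_le_iff_mem _).2 (pow_mem_pow hy _)))) le_sup_left) le_sup_right

section ColonQuotient

variable {A B M : Ideal R} {y z : R}

theorem mul_mem_inf_colon (hz : z ∈ M) {a : R} (ha : a ∈ B.colon (span {z * y})) :
    a * z ∈ M ⊓ B.colon (span {y}) :=
  mem_inf.2 ⟨mul_mem_left _ _ hz,
    mem_colon_span_singleton.2 (by simpa [mul_assoc] using mem_colon_span_singleton.1 ha)⟩

variable (A B M y) in
def colonMulQuot (hz : z ∈ M) :
    B.colon (span {z * y}) →ₗ[R]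
      (M ⊓ B.colon (span {y}) : Ideal R) ⧸
        Submodule.comap (M ⊓ B.colon (span {y}) : Ideal R).subtype A :=
  (Submodule.mkQ _).comp <| LinearMap.codRestrict _
    ((LinearMap.mulRight R z).comp (Submodule.subtype _)) fun a => mul_mem_inf_colon hz a.2

theorem colonMulQuot_apply (hz : z ∈ M) (a : B.colon (span {z * y})) :
    colonMulQuot A B M y hz a = Submodule.Quotient.mk ⟨a * z, mul_mem_inf_colon hz a.2⟩ :=
  rfl

theorem ker_colonMulQuot (hz : z ∈ M) :
    LinearMap.ker (colonMulQuot A B M y hz) =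
      Submodule.comap (B.colon (span {z * y})).subtype (A.colon (span {z})) := by
  ext a
  simp [colonMulQuot_apply, Submodule.Quotient.mk_eq_zero]

theorem mem_colon_of_eq_mul_add (hA : A ≤ B.colon (span {y})) {w a b : R}
    (hw : w ∈ B.colon (span {y})) (hb : b ∈ A) (h : w = a * z + b) :
    a ∈ B.colon (span {z * y}) := by
  rw [mem_colon_span_singleton] at hw ⊢
  rw [show a * (z * y) = w * y - b * y by rw [h]; ring]
  exact sub_mem hw (mem_colon_span_singleton.1 (hA hb))

theorem colonMulQuot_eq_mk (hz : z ∈ M) {w a b : R} (hw : w ∈ M ⊓ B.colon (span {y}))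
    (ha : a ∈ B.colon (span {z * y})) (hb : b ∈ A) (h : w = a * z + b) :
    colonMulQuot A B M y hz ⟨a, ha⟩ = Submodule.Quotient.mk ⟨w, hw⟩ := by
  rw [colonMulQuot_apply, Submodule.Quotient.eq]
  simpa [h] using neg_mem hb

theorem colonMulQuot_surjective (hz : z ∈ M) (hM : M ≤ span {z} ⊔ A)
    (hA : A ≤ B.colon (span {y})) : Function.Surjective (colonMulQuot A B M y hz) := by
  rintro ⟨⟨w, hw⟩⟩
  obtain ⟨u, hu, b, hb, rfl⟩ := Submodule.mem_sup.1 (hM (mem_inf.1 hw).1)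
  obtain ⟨a, rfl⟩ := mem_span_singleton'.1 hu
  have ha := mem_colon_of_eq_mul_add hA (mem_inf.1 hw).2 hb rfl
  exact ⟨⟨a, ha⟩, colonMulQuot_eq_mk hz hw ha hb rfl⟩

noncomputable def colonMulQuotEquiv (hz : z ∈ M) (hM : M ≤ span {z} ⊔ A)
    (hA : A ≤ B.colon (span {y})) :
    ((M ⊓ B.colon (span {y}) : Ideal R) ⧸
        Submodule.comap (M ⊓ B.colon (span {y}) : Ideal R).subtype A) ≃ₗ[R]
      B.colon (span {z * y}) ⧸
        Submodule.comap (B.colon (span {z * y})).subtype (A.colon (span {z})) :=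
  ((Submodule.quotEquivOfEq _ _ (ker_colonMulQuot hz).symm).trans
    ((colonMulQuot A B M y hz).quotKerEquivOfSurjective (colonMulQuot_surjective hz hM hA))).symm

theorem colonMulQuotEquiv_mk (hz : z ∈ M) (hM : M ≤ span {z} ⊔ A) (hA : A ≤ B.colon (span {y}))
    {w a b : R} (hw : w ∈ M ⊓ B.colon (span {y})) (ha : a ∈ B.colon (span {z * y}))
    (hb : b ∈ A) (h : w = a * z + b) :
    colonMulQuotEquiv hz hM hA (Submodule.Quotient.mk ⟨w, hw⟩) =
      Submodule.Quotient.mk ⟨a, ha⟩ := by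
  rw [colonMulQuotEquiv, LinearEquiv.symm_apply_eq, LinearEquiv.trans_apply,
    Submodule.quotEquivOfEq_mk, LinearMap.quotKerEquivOfSurjective_apply_mk,
    colonMulQuot_eq_mk hz hw ha hb h]

end ColonQuotient

end Ideal

open Ideal

theorem stmt_16_general {R : Type*} [CommRing R]
    (I J : Ideal R) (y : R)
    (hI : I = J ⊔ Ideal.span {y})
    (n : ℕ) (hn : 2 ≤ n) :
    ∃ e : ((I ^ (n - 1) ⊓ (J * I ^ (n - 1)).colon (Ideal.span {y}) : Ideal R) ⧸
            Submodule.comap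
              (I ^ (n - 1) ⊓ (J * I ^ (n - 1)).colon (Ideal.span {y}) : Ideal R).subtype
              (J * I ^ (n - 2))) ≃ₗ[R]
          (((J * I ^ (n - 1)).colon (Ideal.span {y ^ n}) : Ideal R) ⧸
            Submodule.comap
              ((J * I ^ (n - 1)).colon (Ideal.span {y ^ n}) : Ideal R).subtype
              ((J * I ^ (n - 2)).colon (Ideal.span {y ^ (n - 1)}))),
      ∀ (w : R) (hw : w ∈ (I ^ (n - 1) ⊓ (J * I ^ (n - 1)).colon (Ideal.span {y}) : Ideal R))
        (a b : R), b ∈ J * I ^ (n - 2) → w = a * y ^ (n - 1) + b →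
        ∃ ha : a ∈ (J * I ^ (n - 1)).colon (Ideal.span {y ^ n}),
          e (Submodule.Quotient.mk
              (p := Submodule.comap
                (I ^ (n - 1) ⊓ (J * I ^ (n - 1)).colon (Ideal.span {y}) : Ideal R).subtype
                (J * I ^ (n - 2)))
              ⟨w, hw⟩) =
            Submodule.Quotient.mk
              (p := Submodule.comap
                ((J * I ^ (n - 1)).colon (Ideal.span {y ^ n}) : Ideal R).subtype
                ((J * I ^ (n - 2)).colon (Ideal.span {y ^ (n - 1)})))
              ⟨a, ha⟩ := by
  obtain ⟨m, rfl⟩ : ∃ m, n = m + 1 + 1 := ⟨n - 2, by omega⟩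
  subst hI
  have hy : y ∈ J ⊔ span {y} := mem_sup_right (mem_span_singleton_self y)
  have hz : y ^ (m + 1) ∈ (J ⊔ span {y}) ^ (m + 1) := pow_mem_pow hy _
  have hA : J * (J ⊔ span {y}) ^ m ≤ (J * (J ⊔ span {y}) ^ (m + 1)).colon (span {y}) :=
    fun b hb => mem_colon_span_singleton.2 <| by
      rw [pow_succ, ← mul_assoc]
      exact mul_mem_mul hb hy
  have hM := sup_span_singleton_pow_succ_le J y m
  rw [show m + 1 + 1 - 1 = m + 1 from rfl, show m + 1 + 1 - 2 = m from rfl, pow_succ y (m + 1)]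
  exact ⟨colonMulQuotEquiv hz hM hA, fun w hw a b hb h =>
    have ha := mem_colon_of_eq_mul_add hA (mem_inf.1 hw).2 hb h
    ⟨ha, colonMulQuotEquiv_mk hz hM hA hw ha hb h⟩⟩

/-- `R` Noetherian local, `I` minimally generated by `x1,…,xs,y` with
`x1,…,xs` a regular sequence, `J = (x1,…,xs)`. For `n ≥ 2`, sending
`w ∈ I^(n-1) ∩ (J*I^(n-1) : y)`, written `w = a*y^(n-1) + b` with `b ∈ J*I^(n-2)`,
to the class of `a` induces a well-defined `R`-module isomorphism
`(I^(n-1) ∩ (J*I^(n-1) : y))/(J*I^(n-2)) ≅ (J*I^(n-1) : y^n)/(J*I^(n-2) : y^(n-1))`. -/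
theorem stmt_16 {R : Type*} [CommRing R] [IsNoetherianRing R] [IsLocalRing R]
    (I J : Ideal R) (s : ℕ) (x : Fin s → R) (y : R)
    (hJ : J = Ideal.span (Set.range x))
    (hI : I = J ⊔ Ideal.span {y})
    (hminy : y ∉ J)
    (hminx : ∀ i : Fin s, x i ∉ Ideal.span ((x '' {j : Fin s | j ≠ i}) ∪ {y}))
    (hreg : ∀ i : Fin s, ∀ r : R,
      r * x i ∈ Ideal.span (x '' {j : Fin s | j < i}) →
        r ∈ Ideal.span (x '' {j : Fin s | j < i}))
    (hprop : I ≠ ⊤)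
    (n : ℕ) (hn : 2 ≤ n) :
    ∃ e : ((I ^ (n - 1) ⊓ (J * I ^ (n - 1)).colon (Ideal.span {y}) : Ideal R) ⧸
            Submodule.comap
              (I ^ (n - 1) ⊓ (J * I ^ (n - 1)).colon (Ideal.span {y}) : Ideal R).subtype
              (J * I ^ (n - 2))) ≃ₗ[R]
          (((J * I ^ (n - 1)).colon (Ideal.span {y ^ n}) : Ideal R) ⧸
            Submodule.comap
              ((J * I ^ (n - 1)).colon (Ideal.span {y ^ n}) : Ideal R).subtype
              ((J * I ^ (n - 2)).colon (Ideal.span {y ^ (n - 1)}))),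
      ∀ (w : R) (hw : w ∈ (I ^ (n - 1) ⊓ (J * I ^ (n - 1)).colon (Ideal.span {y}) : Ideal R))
        (a b : R), b ∈ J * I ^ (n - 2) → w = a * y ^ (n - 1) + b →
        ∃ ha : a ∈ (J * I ^ (n - 1)).colon (Ideal.span {y ^ n}),
          e (Submodule.Quotient.mk
              (p := Submodule.comap
                (I ^ (n - 1) ⊓ (J * I ^ (n - 1)).colon (Ideal.span {y}) : Ideal R).subtype
                (J * I ^ (n - 2)))
              ⟨w, hw⟩) =
            Submodule.Quotient.mk
              (p := Submodule.comap
                ((J * I ^ (n - 1)).colon (Ideal.span {y ^ n}) : Ideal R).subtype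
                ((J * I ^ (n - 2)).colon (Ideal.span {y ^ (n - 1)})))
              ⟨a, ha⟩ :=
  stmt_16_general I J y hI n hn
end
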